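/- Let A be an abelian group (written additively) and φ, ψ endomorphisms of A. The composition law μ(x,y) := φ(x) + ψ(y) on A is associative if and only if φ∘φ = φ, ψ∘ψ = ψ, and φ∘ψ = ψ∘φ. -/
import Mathlib


/-- For endomorphisms `φ, ψ` of an abelian group `A`, the law `μ(x,y) = φ(x) + ψ(y)` is
associative if and only if `φ∘φ = φ`, `ψ∘ψ = ψ` and `φ∘ψ = ψ∘φ`. -/
theorem stmt_18 {A : Type*} [AddCommGroup A] (φ ψ : A →+ A) :
    (∀ x y z : A, φ x + ψ (φ y + ψ z) = φ (φ x + ψ y) + ψ z) ↔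
      ((∀ a : A, φ (φ a) = φ a) ∧ (∀ a : A, ψ (ψ a) = ψ a) ∧
        (∀ a : A, φ (ψ a) = ψ (φ a))) := by
  constructor
  · intro h
    refine ⟨fun a => ?_, fun a => ?_, fun a => ?_⟩
    · have := h a 0 0; simpa using this.symm
    · have := h 0 0 a; simpa using this
    · have := h 0 a 0; simpa using this.symm
  · rintro ⟨h1, h2, h3⟩ x y z
    simp [map_add, h1, h2, h3]
    abel
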